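/- arXiv:1504.02273 — 2 statements merged into one kernel-verified Lean document; each statement's English description precedes it below -/
import Mathlib

section
/- Let K ⊆ X be compact and η ∈ G₂. Then for ν-almost every orbit C having non-empty intersection with K ∩ Kη⁻¹: (a) the restrictions to K ∩ Kη⁻¹ of the measure μ_C and of its translate R_ημ_C are equivalent (mutually absolutely continuous); (b) the Radon–Nikodym derivative of R_ημ_C with respect to μ_C coincides, μ_C-almost everywhere on C ∩ K ∩ Kη⁻¹, with the Radon–Nikodym derivative λ(·,η) = d(R_ημ)/dμ. -/
/-!
Write `f = (· η⁻¹)` and `λ = d(f_*μ)/dμ`, so that `f_*μ = λ • μ`. Since `f` preserves every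
`G₂`-orbit, the sets `p⁻¹' S` are `f`-invariant, so for `T ⊆ A = K ∩ Kη⁻¹` the functions
`1_{f⁻¹ T}` and `1_T λ`, integrable because `f⁻¹ T ⊆ K`, have equal integrals over every `p⁻¹' S`.
Disintegrating, the fibre integrals `μ_C (f⁻¹ T)` and `∫_T λ dμ_C` have equal integrals over every
measurable `S ⊆ Q`, hence agree for `ν`-a.e. `C`. Running `T` through a countable π-system
generating the Borel sets gives `(f_* μ_C)|_A = (λ • μ_C)|_A` for `ν`-a.e. `C`; as `λ > 0` holds
`μ`-a.e., hence `μ_C`-a.e. for `ν`-a.e. `C`, both claims follow.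
-/

open MeasureTheory Set
open scoped ENNReal

section

variable {X Q : Type*} [MeasurableSpace X] [MeasurableSpace Q]

lemma countable_generatePiSystem {α : Type*} {S : Set (Set α)} (hS : S.Countable) :
    (generatePiSystem S).Countable := by
  have h : generatePiSystem S ⊆ sInter '' {t | t.Finite ∧ t ⊆ S} := by
    intro s hs
    induction hs with
    | base h => exact ⟨{_}, ⟨finite_singleton _, singleton_subset_iff.2 h⟩, sInter_singleton _⟩
    | inter _ _ _ ih₁ ih₂ =>
        obtain ⟨t₁, ⟨hf₁, hs₁⟩, rfl⟩ := ih₁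
        obtain ⟨t₂, ⟨hf₂, hs₂⟩, rfl⟩ := ih₂
        exact ⟨t₁ ∪ t₂, ⟨hf₁.union hf₂, union_subset hs₁ hs₂⟩, sInter_union _ _⟩
  exact ((countable_ofPred_finite_subset hS).image _).mono h

lemma ae_measure_eq_of_forall_ae_apply_eq [MeasurableSpace.CountablyGenerated X] {ν : Measure Q}
    {m₁ m₂ : Q → Measure X} (hfin : ∀ᵐ c ∂ν, IsFiniteMeasure (m₁ c))
    (h : ∀ s, MeasurableSet s → ∀ᵐ c ∂ν, m₁ c s = m₂ c s) : ∀ᵐ c ∂ν, m₁ c = m₂ c := by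
  set C := generatePiSystem (MeasurableSpace.countableGeneratingSet X)
  have hCmeas : ∀ s ∈ C, MeasurableSet s := generatePiSystem_measurableSet
    fun _ hs => MeasurableSpace.measurableSet_countableGeneratingSet hs
  have hC : ∀ᵐ c ∂ν, ∀ s ∈ C, m₁ c s = m₂ c s :=
    (ae_ball_iff (countable_generatePiSystem
      MeasurableSpace.countable_countableGeneratingSet)).2 fun s hs => h s (hCmeas s hs)
  filter_upwards [hfin, hC, h univ MeasurableSet.univ] with c _ hcC hc
  refine ext_of_generate_finite C ?_ (isPiSystem_generatePiSystem _) hcC hc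
  rw [generateFrom_generatePiSystem_eq, MeasurableSpace.generateFrom_countableGeneratingSet]

lemma MeasureTheory.Measure.rnDeriv_ae_eq_of_restrict_eq_withDensity {m m' : Measure X}
    [SigmaFinite m] [SigmaFinite m'] {A : Set X} (hA : MeasurableSet A) {φ : X → ℝ≥0∞} (hφ : Measurable φ)
    (h : m'.restrict A = (m.withDensity φ).restrict A) : m'.rnDeriv m =ᵐ[m.restrict A] φ := by
  rw [ae_eq_restrict_iff_indicator_ae_eq hA]
  have h' : m'.restrict A = m.withDensity (A.indicator φ) := by
    rw [h, restrict_withDensity hA, withDensity_indicator hA]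
  exact (rnDeriv_restrict m' m hA).symm.trans
    (h' ▸ rnDeriv_withDensity m (hφ.indicator hA))

structure IsDisintegration (p : X → Q) (μ : Measure X) (ν : Measure Q) (μC : Q → Measure X) :
    Prop where
  measure_compl_preimage_singleton : ∀ c, μC c (p ⁻¹' {c})ᶜ = 0
  ae_integrable : ∀ g : X → ℝ, Integrable g μ → ∀ᵐ c ∂ν, Integrable g (μC c)
  integrable_integral : ∀ g : X → ℝ, Integrable g μ → Integrable (fun c => ∫ x, g x ∂μC c) ν
  integral_integral : ∀ g : X → ℝ, Integrable g μ → ∫ c, ∫ x, g x ∂μC c ∂ν = ∫ x, g x ∂μ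

namespace IsDisintegration

variable {p : X → Q} {μ : Measure X} {ν : Measure Q} {μC : Q → Measure X}

lemma of_complex (hconc : ∀ c, μC c (p ⁻¹' {c})ᶜ = 0)
    (hdis : ∀ g : X → ℂ, Integrable g μ →
      (∀ᵐ c ∂ν, Integrable g (μC c)) ∧ Integrable (fun c => ∫ x, g x ∂μC c) ν ∧
        ∫ c, ∫ x, g x ∂μC c ∂ν = ∫ x, g x ∂μ) :
    IsDisintegration p μ ν μC where
  measure_compl_preimage_singleton := hconc
  ae_integrable g hg := (hdis _ (hg.ofReal (𝕜 := ℂ))).1.mono fun _ hc => by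
    simpa only [RCLike.ofReal_re] using hc.re
  integrable_integral g hg := by
    simpa only [integral_ofReal, RCLike.ofReal_re] using (hdis _ (hg.ofReal (𝕜 := ℂ))).2.1.re
  integral_integral g hg := by
    have h := (hdis _ (hg.ofReal (𝕜 := ℂ))).2.2
    simp only [integral_ofReal] at h
    exact_mod_cast h

variable (hD : IsDisintegration p μ ν μC)
include hD

lemma ae_mem_fiber (c : Q) : ∀ᵐ x ∂μC c, p x = c :=
  hD.measure_compl_preimage_singleton c

lemma setIntegral_integral (hp : Measurable p) {g : X → ℝ} (hg : Integrable g μ) {S : Set Q}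
    (hS : MeasurableSet S) : ∫ c in S, ∫ x, g x ∂μC c ∂ν = ∫ x in p ⁻¹' S, g x ∂μ := by
  rw [← integral_indicator hS, ← integral_indicator (hp hS),
    ← hD.integral_integral _ (hg.indicator (hp hS))]
  refine integral_congr_ae (ae_of_all _ fun c => ?_)
  by_cases hc : c ∈ S
  · rw [indicator_of_mem hc]
    exact integral_congr_ae ((hD.ae_mem_fiber c).mono fun x hx =>
      (indicator_of_mem (by rwa [mem_preimage, hx]) g).symm)
  · rw [indicator_of_notMem hc, eq_comm]
    exact integral_eq_zero_of_ae ((hD.ae_mem_fiber c).mono fun x hx =>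
      indicator_of_notMem (by rwa [mem_preimage, hx]) g)

lemma ae_integral_eq_of_forall_setIntegral_preimage_eq [SigmaFinite ν] (hp : Measurable p)
    {g₁ g₂ : X → ℝ} (hg₁ : Integrable g₁ μ) (hg₂ : Integrable g₂ μ)
    (h : ∀ S, MeasurableSet S → ∫ x in p ⁻¹' S, g₁ x ∂μ = ∫ x in p ⁻¹' S, g₂ x ∂μ) :
    ∀ᵐ c ∂ν, ∫ x, g₁ x ∂μC c = ∫ x, g₂ x ∂μC c :=
  ae_eq_of_forall_setIntegral_eq_of_sigmaFinite
    (fun _ _ _ => (hD.integrable_integral _ hg₁).integrableOn)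
    (fun _ _ _ => (hD.integrable_integral _ hg₂).integrableOn) fun S hS _ => by
      rw [hD.setIntegral_integral hp hg₁ hS, hD.setIntegral_integral hp hg₂ hS, h S hS]

lemma ae_measure_lt_top {T : Set X} (hT : MeasurableSet T) (hμT : μ T ≠ ∞) :
    ∀ᵐ c ∂ν, μC c T < ∞ := by
  have hint : Integrable (T.indicator fun _ => (1 : ℝ)) μ :=
    (integrable_indicator_iff hT).2 (integrableOn_const hμT)
  filter_upwards [hD.ae_integrable _ hint] with c hc
  exact ((integrableOn_const_iff).1 ((integrable_indicator_iff hT).1 hc)).resolve_left (by simp)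

lemma ae_measure_eq_zero [SigmaFinite ν] (hp : Measurable p) {T : Set X} (hT : MeasurableSet T)
    (hμT : μ T = 0) : ∀ᵐ c ∂ν, μC c T = 0 := by
  have hint : Integrable (T.indicator 1 : X → ℝ) μ :=
    (integrable_indicator_iff hT).2 (integrableOn_const (by simp [hμT]))
  have hreal := hD.ae_integral_eq_of_forall_setIntegral_preimage_eq hp hint (integrable_zero X ℝ μ)
    fun S _ => integral_congr_ae (ae_restrict_of_ae (indicator_meas_zero hμT))
  filter_upwards [hreal, hD.ae_measure_lt_top hT (by simp [hμT])] with c hc hcT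
  simp only [integral_indicator_one hT, Pi.zero_apply, integral_zero] at hc
  exact (measureReal_eq_zero_iff hcT.ne).1 hc

lemma ae_ae_of_ae [SigmaFinite ν] (hp : Measurable p) {P : X → Prop} (h : ∀ᵐ x ∂μ, P x) :
    ∀ᵐ c ∂ν, ∀ᵐ x ∂μC c, P x := by
  have h0 : μ (toMeasurable μ {x | ¬P x}) = 0 := by rwa [measure_toMeasurable, ← ae_iff]
  filter_upwards [hD.ae_measure_eq_zero hp (measurableSet_toMeasurable _ _) h0] with c hc
  exact measure_mono_null (subset_toMeasurable _ _) hc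

lemma ae_sigmaFinite [SigmaFinite μ] : ∀ᵐ c ∂ν, SigmaFinite (μC c) := by
  have h : ∀ᵐ c ∂ν, ∀ n, μC c (spanningSets μ n) < ∞ := ae_all_iff.2 fun n =>
    hD.ae_measure_lt_top (measurableSet_spanningSets μ n) (measure_spanningSets_lt_top μ n).ne
  filter_upwards [h] with c hc
  exact ⟨⟨⟨spanningSets μ, fun _ => trivial, hc, iUnion_spanningSets μ⟩⟩⟩

lemma ae_lintegral_eq_ofReal_integral_toReal [SigmaFinite ν] (hp : Measurable p)
    {φ : X → ℝ≥0∞} (hφ : Measurable φ) (hφμ : ∫⁻ x, φ x ∂μ ≠ ∞) :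
    ∀ᵐ c ∂ν, ∫⁻ x, φ x ∂μC c = ENNReal.ofReal (∫ x, (φ x).toReal ∂μC c) := by
  filter_upwards [hD.ae_integrable _ (integrable_toReal_of_lintegral_ne_top hφ.aemeasurable hφμ),
    hD.ae_ae_of_ae hp (ae_lt_top hφ hφμ)] with c hc hfin
  rw [ofReal_integral_eq_lintegral_ofReal hc (ae_of_all _ fun _ => ENNReal.toReal_nonneg)]
  exact lintegral_congr_ae (ofReal_toReal_ae_eq hfin).symm

lemma ae_lintegral_eq_of_forall_setLIntegral_preimage_eq [SigmaFinite ν] (hp : Measurable p)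
    {φ ψ : X → ℝ≥0∞} (hφ : Measurable φ) (hψ : Measurable ψ) (hφμ : ∫⁻ x, φ x ∂μ ≠ ∞)
    (hψμ : ∫⁻ x, ψ x ∂μ ≠ ∞)
    (h : ∀ S, MeasurableSet S → ∫⁻ x in p ⁻¹' S, φ x ∂μ = ∫⁻ x in p ⁻¹' S, ψ x ∂μ) :
    ∀ᵐ c ∂ν, ∫⁻ x, φ x ∂μC c = ∫⁻ x, ψ x ∂μC c := by
  have hreal := hD.ae_integral_eq_of_forall_setIntegral_preimage_eq hp
    (integrable_toReal_of_lintegral_ne_top hφ.aemeasurable hφμ)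
    (integrable_toReal_of_lintegral_ne_top hψ.aemeasurable hψμ) fun S hS => by
      rw [integral_toReal hφ.aemeasurable.restrict (ae_restrict_of_ae (ae_lt_top hφ hφμ)),
        integral_toReal hψ.aemeasurable.restrict (ae_restrict_of_ae (ae_lt_top hψ hψμ)), h S hS]
  filter_upwards [hreal, hD.ae_lintegral_eq_ofReal_integral_toReal hp hφ hφμ,
    hD.ae_lintegral_eq_ofReal_integral_toReal hp hψ hψμ] with c hc hφc hψc
  rw [hφc, hψc, hc]

lemma ae_map_apply_eq_withDensity_apply [SigmaFinite ν] (hp : Measurable p) {f : X → X}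
    (hf : Measurable f) (hpf : ∀ x, p (f x) = p x) {φ : X → ℝ≥0∞} (hφ : Measurable φ)
    (hμf : μ.map f = μ.withDensity φ) {T : Set X} (hT : MeasurableSet T)
    (hμT : μ (f ⁻¹' T) ≠ ∞) :
    ∀ᵐ c ∂ν, (μC c).map f T = (μC c).withDensity φ T := by
  have hsat : ∀ S : Set Q, f ⁻¹' (p ⁻¹' S) = p ⁻¹' S := fun S => by
    ext x; simp only [mem_preimage, hpf]
  have hwd : μ.withDensity φ T = μ (f ⁻¹' T) := by rw [← hμf, Measure.map_apply hf hT]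
  have h := hD.ae_lintegral_eq_of_forall_setLIntegral_preimage_eq hp
    (measurable_one.indicator (hf hT)) (hφ.indicator hT)
    (by rwa [lintegral_indicator_one (hf hT)])
    (by rwa [lintegral_indicator hT, ← withDensity_apply _ hT, hwd]) fun S hS => by
      rw [lintegral_indicator_one (hf hT), lintegral_indicator hT, Measure.restrict_restrict hT,
        ← withDensity_apply _ (hT.inter (hp hS)), ← hμf, Measure.map_apply hf (hT.inter (hp hS)),
        preimage_inter, hsat, Measure.restrict_apply (hf hT)]
  filter_upwards [h] with c hc
  rwa [Measure.map_apply hf hT, withDensity_apply _ hT, ← lintegral_indicator_one (hf hT),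
    ← lintegral_indicator hT]

theorem ae_restrict_map_absolutelyContinuous_and_rnDeriv_eq
    [MeasurableSpace.CountablyGenerated X] [SigmaFinite μ] [SigmaFinite ν] (hp : Measurable p)
    (e : X ≃ᵐ X) (hpe : ∀ x, p (e x) = p x) (he₁ : μ.map e ≪ μ) (he₂ : μ ≪ μ.map e)
    {A : Set X} (hA : MeasurableSet A) (hμA : μ (e ⁻¹' A) ≠ ∞) :
    ∀ᵐ c ∂ν, (((μC c).map e).restrict A ≪ (μC c).restrict A ∧
        (μC c).restrict A ≪ ((μC c).map e).restrict A) ∧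
      ∀ᵐ x ∂(μC c).restrict A, ((μC c).map e).rnDeriv (μC c) x = (μ.map e).rnDeriv μ x := by
  have := e.sigmaFinite_map (μ := μ)
  have hφ : Measurable ((μ.map e).rnDeriv μ) := Measure.measurable_rnDeriv _ _
  have hμe : μ.map e = μ.withDensity ((μ.map e).rnDeriv μ) :=
    (Measure.withDensity_rnDeriv_eq _ _ he₁).symm
  have hrestrict : ∀ᵐ c ∂ν, ((μC c).map e).restrict A =
      ((μC c).withDensity ((μ.map e).rnDeriv μ)).restrict A := by
    refine ae_measure_eq_of_forall_ae_apply_eq ?_ fun s hs => ?_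
    · filter_upwards [hD.ae_measure_lt_top (e.measurable hA) hμA] with c hc
      exact ⟨by rwa [Measure.restrict_apply_univ, Measure.map_apply e.measurable hA]⟩
    · simp only [Measure.restrict_apply hs]
      exact hD.ae_map_apply_eq_withDensity_apply hp e.measurable hpe hφ hμe (hs.inter hA)
        (ne_top_of_le_ne_top hμA (measure_mono (preimage_mono inter_subset_right)))
  filter_upwards [hrestrict, hD.ae_sigmaFinite, hD.ae_ae_of_ae hp (Measure.rnDeriv_pos' he₂)]
    with c hc _ hpos
  have := e.sigmaFinite_map (μ := μC c)
  refine ⟨⟨?_, ?_⟩, Measure.rnDeriv_ae_eq_of_restrict_eq_withDensity hA hφ hc⟩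
  · rw [hc, restrict_withDensity hA]
    exact withDensity_absolutelyContinuous _ _
  · rw [hc, restrict_withDensity hA]
    exact withDensity_absolutelyContinuous' hφ.aemeasurable
      (ae_restrict_of_ae (hpos.mono fun _ h => h.ne'))

end IsDisintegration

end

def rightActionHomeomorph {G X : Type*} [Group G] [TopologicalSpace G] [TopologicalSpace X]
    (act : X → G → X) (hact : Continuous fun q : X × G => act q.1 q.2)
    (hact1 : ∀ x, act x 1 = x) (hactm : ∀ x g g', act (act x g) g' = act x (g * g')) (g : G) :
    X ≃ₜ X where
  toFun x := act x g
  invFun x := act x g⁻¹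
  left_inv x := by simp only [hactm, mul_inv_cancel, hact1]
  right_inv x := by simp only [hactm, inv_mul_cancel, hact1]
  continuous_toFun := hact.comp (continuous_id.prodMk continuous_const)
  continuous_invFun := hact.comp (continuous_id.prodMk continuous_const)

theorem stmt7_general
    {G : Type*} [Group G] [TopologicalSpace G]
    (G₂ : Subgroup G)
    {X : Type*} [TopologicalSpace X] [TopologicalSpace.MetrizableSpace X]
    [SecondCountableTopology X]
    [MeasurableSpace X] [BorelSpace X]
    (act : X → G → X) (hactc : Continuous fun q : X × G => act q.1 q.2)
    (hact1 : ∀ x : X, act x 1 = x)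
    (hactm : ∀ (x : X) (g g' : G), act (act x g) g' = act x (g * g'))
    (μ : Measure X) [SigmaFinite μ] [μ.Regular]
    (hqi : ∀ g : G, μ.map (fun x => act x (g⁻¹)) ≪ μ ∧ μ ≪ μ.map (fun x => act x (g⁻¹)))
    {Q : Type*} [MeasurableSpace Q]
    (p : X → Q)
    (hporb : ∀ x y : X, p x = p y ↔ ∃ η ∈ G₂, act x η = y)
    (hQσ : ∀ E : Set Q, MeasurableSet E ↔ MeasurableSet (p ⁻¹' E))
    (μ' : Measure X) [IsFiniteMeasure μ']
    (ν : Measure Q) (hν : ν = μ'.map p)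
    (μC : Q → Measure X)
    (hconc : ∀ c : Q, μC c ((p ⁻¹' {c})ᶜ) = 0)
    (hdis : ∀ g : X → ℂ, Integrable g μ →
      (∀ᵐ c ∂ν, Integrable g (μC c)) ∧
      Integrable (fun c => ∫ x, g x ∂(μC c)) ν ∧
      ∫ c, (∫ x, g x ∂(μC c)) ∂ν = ∫ x, g x ∂μ)
    :
    ∀ K : Set X, IsCompact K → ∀ η ∈ G₂,
      ∀ᵐ c ∂ν,
        (p ⁻¹' {c} ∩ (K ∩ (fun x => act x η) ⁻¹' K)).Nonempty →
          (((μC c).map (fun x => act x (η⁻¹))).restrict (K ∩ (fun x => act x η) ⁻¹' K)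
              ≪ (μC c).restrict (K ∩ (fun x => act x η) ⁻¹' K) ∧
            (μC c).restrict (K ∩ (fun x => act x η) ⁻¹' K)
              ≪ ((μC c).map (fun x => act x (η⁻¹))).restrict (K ∩ (fun x => act x η) ⁻¹' K)) ∧
          ∀ᵐ x ∂((μC c).restrict (K ∩ (fun x => act x η) ⁻¹' K)),
            ((μC c).map (fun x => act x (η⁻¹))).rnDeriv (μC c) x
              = (μ.map (fun x => act x (η⁻¹))).rnDeriv μ x := by
  intro K hK η hη
  subst hν
  have hD : IsDisintegration p μ (μ'.map p) μC := .of_complex hconc hdis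
  have hp : Measurable p := fun E hE => (hQσ E).1 hE
  have hA : MeasurableSet (K ∩ (fun x => act x η) ⁻¹' K) := hK.measurableSet.inter
    (hK.measurableSet.preimage (rightActionHomeomorph act hactc hact1 hactm η).measurable)
  have hμA : μ ((fun x => act x η⁻¹) ⁻¹' (K ∩ (fun x => act x η) ⁻¹' K)) ≠ ∞ := by
    refine ne_top_of_le_ne_top hK.measure_lt_top.ne (measure_mono fun x hx => ?_)
    simpa only [mem_preimage, hactm, inv_mul_cancel, hact1] using hx.2
  have hpη : ∀ x, p (act x η⁻¹) = p x := fun x =>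
    (hporb _ _).2 ⟨η, hη, by rw [hactm, inv_mul_cancel, hact1]⟩
  filter_upwards [hD.ae_restrict_map_absolutelyContinuous_and_rnDeriv_eq hp
    (rightActionHomeomorph act hactc hact1 hactm η⁻¹).toMeasurableEquiv hpη (hqi η).1 (hqi η).2
    hA hμA] with c hc using fun _ => hc

theorem stmt7
    {G : Type*} [Group G] [TopologicalSpace G] [IsTopologicalGroup G]
    [LocallyCompactSpace G] [SecondCountableTopology G] [T2Space G]
    (G₁ G₂ : Subgroup G) (hG₁ : IsClosed (G₁ : Set G)) (hG₂ : IsClosed (G₂ : Set G))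
    {X : Type*} [TopologicalSpace X] [TopologicalSpace.MetrizableSpace X]
    [LocallyCompactSpace X] [SecondCountableTopology X]
    [MeasurableSpace X] [BorelSpace X]
    (π : G → X) (hπc : Continuous π) (hπo : IsOpenMap π) (hπs : Function.Surjective π)
    (act : X → G → X) (hactc : Continuous fun q : X × G => act q.1 q.2)
    (hact1 : ∀ x : X, act x 1 = x)
    (hactm : ∀ (x : X) (g g' : G), act (act x g) g' = act x (g * g'))
    (hπact : ∀ g g' : G, π (g * g') = act (π g) g')
    (hπker : ∀ g g' : G, π g = π g' ↔ ∃ h ∈ G₁, g' = h * g)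
    (μ : Measure X) [SigmaFinite μ] [μ.Regular] (hμ : μ ≠ 0)
    (hqi : ∀ g : G, μ.map (fun x => act x (g⁻¹)) ≪ μ ∧ μ ≪ μ.map (fun x => act x (g⁻¹)))
    {Q : Type*} [MeasurableSpace Q]
    (p : X → Q) (hps : Function.Surjective p)
    (hporb : ∀ x y : X, p x = p y ↔ ∃ η ∈ G₂, act x η = y)
    (hQσ : ∀ E : Set Q, MeasurableSet E ↔ MeasurableSet (p ⁻¹' E))
    (μ' : Measure X) [IsFiniteMeasure μ'] (hμ'₁ : μ' ≪ μ) (hμ'₂ : μ ≪ μ')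
    (ν : Measure Q) (hν : ν = μ'.map p)
    (μC : Q → Measure X)
    (hconc : ∀ c : Q, μC c ((p ⁻¹' {c})ᶜ) = 0)
    (hdis : ∀ g : X → ℂ, Integrable g μ →
      (∀ᵐ c ∂ν, Integrable g (μC c)) ∧
      Integrable (fun c => ∫ x, g x ∂(μC c)) ν ∧
      ∫ c, (∫ x, g x ∂(μC c)) ∂ν = ∫ x, g x ∂μ)
    :
    ∀ K : Set X, IsCompact K → ∀ η ∈ G₂,
      ∀ᵐ c ∂ν,
        (p ⁻¹' {c} ∩ (K ∩ (fun x => act x η) ⁻¹' K)).Nonempty →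
          (((μC c).map (fun x => act x (η⁻¹))).restrict (K ∩ (fun x => act x η) ⁻¹' K)
              ≪ (μC c).restrict (K ∩ (fun x => act x η) ⁻¹' K) ∧
            (μC c).restrict (K ∩ (fun x => act x η) ⁻¹' K)
              ≪ ((μC c).map (fun x => act x (η⁻¹))).restrict (K ∩ (fun x => act x η) ⁻¹' K)) ∧
          ∀ᵐ x ∂((μC c).restrict (K ∩ (fun x => act x η) ⁻¹' K)),
            ((μC c).map (fun x => act x (η⁻¹))).rnDeriv (μC c) x
              = (μ.map (fun x => act x (η⁻¹))).rnDeriv μ x :=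
  stmt7_general G₂ act hactc hact1 hactm μ hqi p hporb hQσ μ' ν hν μC hconc hdis
end

section
/- The map (ξ,η) ↦ ξx₀η from G₁ × G₂ onto the double coset G₁x₀G₂ is constant exactly on the left G₄-cosets in G₃: ξ₁x₀η₁ = ξ₂x₀η₂ holds if and only if (ξ₂,η₂)⁻¹(ξ₁,η₁) ∈ G₄ (product taken in G₃). It therefore induces a bijection of the coset space G₃/G₄ onto G₁x₀G₂; this bijection is continuous and a Borel isomorphism onto its image: it maps Borel subsets of G₃/G₄ onto Borel subsets of G. In particular every double coset G₁x₀G₂ is a Borel subset of G. -/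
/-!
The fibres of `(ξ, η) ↦ ξ * x₀ * η` are exactly the cosets of `G₄`, so a `G₄`-invariant Borel
set `E ⊆ G₁ × G₂` and its complement have disjoint images. `G₁ × G₂` is Polish, so both images
are analytic, and the Lusin separation theorem yields a Borel set `B` such that the image of `E`
is `B ∩ G₁x₀G₂`. The double coset itself is Borel, being a continuous image of a σ-compact space.
-/

open Set

theorem IsDenseEmbedding.isOpen_range {X Y : Type*} [TopologicalSpace X]
    [LocallyCompactSpace X] [TopologicalSpace Y] [T2Space Y] {e : X → Y}
    (he : IsDenseEmbedding e) : IsOpen (range e) := by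
  refine isOpen_iff_mem_nhds.2 ?_
  rintro _ ⟨x, rfl⟩
  obtain ⟨K, hK, hKx⟩ := exists_compact_mem_nhds x
  obtain ⟨U, hUK, hU, hxU⟩ := mem_nhds_iff.1 hKx
  obtain ⟨V, hV, rfl⟩ := he.isInducing.isOpen_iff.1 hU
  have hVK : V ∩ range e ⊆ e '' K := by
    rintro _ ⟨hv, x', rfl⟩
    exact mem_image_of_mem e (hUK hv)
  have hV_range : V ⊆ range e :=
    calc V ⊆ closure (V ∩ range e) := he.dense.open_subset_closure_inter hV
      _ ⊆ e '' K := (hK.image he.continuous).isClosed.closure_subset_iff.2 hVK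
      _ ⊆ range e := image_subset_range e K
  exact Filter.mem_of_superset (hV.mem_nhds hxU) hV_range

theorem PolishSpace.of_locallyCompactSpace (X : Type*) [TopologicalSpace X]
    [LocallyCompactSpace X] [SecondCountableTopology X] [T2Space X] : PolishSpace X := by
  let _ : MetricSpace X := TopologicalSpace.metrizableSpaceMetric X
  have _ : SecondCountableTopology (UniformSpace.Completion X) :=
    UniformSpace.secondCountable_of_separable _
  have he := UniformSpace.Completion.isDenseEmbedding_coe (α := X)
  have _ : PolishSpace (range ((↑) : X → UniformSpace.Completion X)) :=
    he.isOpen_range.polishSpace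
  exact he.isEmbedding.toHomeomorph.isClosedEmbedding.polishSpace

theorem IsSigmaCompact.measurableSet {Y : Type*} [TopologicalSpace Y] [T2Space Y]
    [MeasurableSpace Y] [OpensMeasurableSpace Y] {s : Set Y} (hs : IsSigmaCompact s) :
    MeasurableSet s := by
  obtain ⟨K, hK, rfl⟩ := hs
  exact .iUnion fun n => (hK n).measurableSet

theorem MeasurableSet.image_of_continuous_of_preimage_image_subset {X Y : Type*}
    [TopologicalSpace X] [PolishSpace X] [MeasurableSpace X] [BorelSpace X]
    [TopologicalSpace Y] [T2Space Y] [MeasurableSpace Y] [OpensMeasurableSpace Y]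
    {f : X → Y} {E : Set X} (hE : MeasurableSet E) (hf : Continuous f)
    (hrange : MeasurableSet (range f)) (hsat : f ⁻¹' (f '' E) ⊆ E) : MeasurableSet (f '' E) := by
  have hdisj : Disjoint (f '' E) (f '' Eᶜ) := by
    rw [disjoint_left]
    rintro _ ha ⟨b, hb, rfl⟩
    exact hb (hsat ha)
  obtain ⟨B, hEB, hB_disj, hB⟩ := (hE.analyticSet.image_of_continuous hf).measurablySeparable
    (hE.compl.analyticSet.image_of_continuous hf) hdisj
  suffices f '' E = B ∩ range f from this ▸ hB.inter hrange
  refine (subset_inter hEB (image_subset_range f E)).antisymm ?_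
  rintro _ ⟨hqB, q, rfl⟩
  by_contra hq
  exact disjoint_left.1 hB_disj (mem_image_of_mem f fun h => hq (mem_image_of_mem f h)) hqB

theorem mul_mul_eq_mul_mul_iff {G : Type*} [Group G] (x a₁ a₂ b₁ b₂ : G) :
    a₁ * x * b₁ = a₂ * x * b₂ ↔ b₁ * b₂⁻¹ = x⁻¹ * (a₂⁻¹ * a₁)⁻¹ * x := by
  rw [mul_inv_eq_iff_eq_mul]
  simp only [mul_inv_rev, inv_inv, mul_assoc, eq_inv_mul_iff_mul_eq]

section DoubleCoset

variable {G : Type*} [Group G] (G₁ G₂ : Subgroup G) (x₀ : G)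

def doubleCosetMap (q : G₁ × G₂) : G := q.1 * x₀ * q.2

theorem range_doubleCosetMap :
    range (doubleCosetMap G₁ G₂ x₀) = {g : G | ∃ ξ ∈ G₁, ∃ η ∈ G₂, g = ξ * x₀ * η} := by
  ext g
  constructor
  · rintro ⟨⟨ξ, η⟩, rfl⟩
    exact ⟨ξ, ξ.2, η, η.2, rfl⟩
  · rintro ⟨ξ, hξ, η, hη, rfl⟩
    exact ⟨(⟨ξ, hξ⟩, ⟨η, hη⟩), rfl⟩

theorem coe_mul_mul_eq_iff_exists_mem_conj (ξ₁ ξ₂ : G₁) (η₁ η₂ : G₂) :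
    (ξ₁ : G) * x₀ * (η₁ : G) = (ξ₂ : G) * x₀ * (η₂ : G) ↔
      ∃ ζ : G, ζ ∈ G₁ ∧ (∃ w ∈ G₂, ζ = x₀ * w * x₀⁻¹) ∧
        (ξ₂ : G)⁻¹ * (ξ₁ : G) = ζ ∧ (η₁ : G) * (η₂ : G)⁻¹ = x₀⁻¹ * ζ⁻¹ * x₀ := by
  rw [mul_mul_eq_mul_mul_iff]
  constructor
  · intro h
    refine ⟨_, G₁.mul_mem (G₁.inv_mem ξ₂.2) ξ₁.2,
      ⟨η₂ * (η₁ : G)⁻¹, G₂.mul_mem η₂.2 (G₂.inv_mem η₁.2), ?_⟩, rfl, h⟩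
    rw [show (η₂ : G) * (η₁ : G)⁻¹ = ((η₁ : G) * (η₂ : G)⁻¹)⁻¹ by group, h]
    group
  · rintro ⟨ζ, -, -, rfl, h⟩
    exact h

theorem preimage_image_doubleCosetMap_subset {E : Set (G₁ × G₂)}
    (hE : ∀ q ∈ E, ∀ (ζ : G₁) (w : G₂), (w : G) = x₀⁻¹ * (ζ : G)⁻¹ * x₀ →
      (q.1 * ζ, w * q.2) ∈ E) :
    doubleCosetMap G₁ G₂ x₀ ⁻¹' (doubleCosetMap G₁ G₂ x₀ '' E) ⊆ E := by
  rintro ⟨ξ₁, η₁⟩ ⟨⟨ξ₂, η₂⟩, hq, heq⟩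
  have hw : ((η₁ * η₂⁻¹ : G₂) : G) = x₀⁻¹ * ((ξ₂⁻¹ * ξ₁ : G₁) : G)⁻¹ * x₀ := by
    push_cast
    exact (mul_mul_eq_mul_mul_iff _ _ _ _ _).1 heq.symm
  simpa using hE _ hq _ _ hw

variable [TopologicalSpace G] [ContinuousMul G]

theorem continuous_doubleCosetMap : Continuous (doubleCosetMap G₁ G₂ x₀) :=
  ((continuous_subtype_val.comp continuous_fst).mul continuous_const).mul
    (continuous_subtype_val.comp continuous_snd)

theorem measurableSet_image_doubleCosetMap [LocallyCompactSpace G] [SecondCountableTopology G]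
    [T2Space G] [MeasurableSpace G] [BorelSpace G]
    (hG₁ : IsClosed (G₁ : Set G)) (hG₂ : IsClosed (G₂ : Set G)) {E : Set (G₁ × G₂)}
    (hE : MeasurableSet E) (hsat : doubleCosetMap G₁ G₂ x₀ ⁻¹' (doubleCosetMap G₁ G₂ x₀ '' E) ⊆ E) :
    MeasurableSet (doubleCosetMap G₁ G₂ x₀ '' E) := by
  have _ : PolishSpace G := .of_locallyCompactSpace G
  have _ : PolishSpace G₁ := hG₁.polishSpace
  have _ : PolishSpace G₂ := hG₂.polishSpace
  have _ : SigmaCompactSpace G₁ := hG₁.sigmaCompactSpace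
  have _ : SigmaCompactSpace G₂ := hG₂.sigmaCompactSpace
  have _ : BorelSpace G₁ := Subtype.borelSpace _
  have _ : BorelSpace G₂ := Subtype.borelSpace _
  have hf := continuous_doubleCosetMap G₁ G₂ x₀
  exact hE.image_of_continuous_of_preimage_image_subset hf (isSigmaCompact_range hf).measurableSet
    hsat

end DoubleCoset

theorem stmt13
    {G : Type*} [Group G] [TopologicalSpace G] [IsTopologicalGroup G]
    [LocallyCompactSpace G] [SecondCountableTopology G] [T2Space G]
    [MeasurableSpace G] [BorelSpace G]
    (G₁ G₂ : Subgroup G) (hG₁ : IsClosed (G₁ : Set G)) (hG₂ : IsClosed (G₂ : Set G))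
    (x₀ : G) :
    (∀ (ξ₁ ξ₂ : ↥G₁) (η₁ η₂ : ↥G₂),
      (ξ₁ : G) * x₀ * (η₁ : G) = (ξ₂ : G) * x₀ * (η₂ : G) ↔
        ∃ ζ : G, ζ ∈ G₁ ∧ (∃ w ∈ G₂, ζ = x₀ * w * x₀⁻¹) ∧
          (ξ₂ : G)⁻¹ * (ξ₁ : G) = ζ ∧ (η₁ : G) * (η₂ : G)⁻¹ = x₀⁻¹ * ζ⁻¹ * x₀) ∧
    Continuous (fun q : ↥G₁ × ↥G₂ => (q.1 : G) * x₀ * (q.2 : G)) ∧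
    Set.range (fun q : ↥G₁ × ↥G₂ => (q.1 : G) * x₀ * (q.2 : G))
      = {g : G | ∃ ξ ∈ G₁, ∃ η ∈ G₂, g = ξ * x₀ * η} ∧
    (∀ E : Set (↥G₁ × ↥G₂), MeasurableSet E →
      (∀ q ∈ E, ∀ (ζ : ↥G₁) (w : ↥G₂), (w : G) = x₀⁻¹ * (ζ : G)⁻¹ * x₀ →
        (q.1 * ζ, w * q.2) ∈ E) →
      MeasurableSet ((fun q : ↥G₁ × ↥G₂ => (q.1 : G) * x₀ * (q.2 : G)) '' E)) ∧
    MeasurableSet {g : G | ∃ ξ ∈ G₁, ∃ η ∈ G₂, g = ξ * x₀ * η} := by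
  refine ⟨coe_mul_mul_eq_iff_exists_mem_conj G₁ G₂ x₀, continuous_doubleCosetMap G₁ G₂ x₀,
    range_doubleCosetMap G₁ G₂ x₀, fun E hE hinv => measurableSet_image_doubleCosetMap G₁ G₂ x₀
      hG₁ hG₂ hE (preimage_image_doubleCosetMap_subset G₁ G₂ x₀ hinv), ?_⟩
  rw [← range_doubleCosetMap, ← image_univ]
  exact measurableSet_image_doubleCosetMap G₁ G₂ x₀ hG₁ hG₂ .univ (subset_univ _)
end
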